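/- arXiv:math/0505262 — 3 statements merged into one kernel-verified Lean document; each statement's English description precedes it below -/
import Mathlib

section
/- The poset 𝔑 is Y-multiranked by the sorting map: if Q covers P in 𝔑, then the weight of Q equals the weight of P plus 1, and for every i ≥ 1 the i-th largest part of P (taken as 0 when i exceeds the width of P) is at most the i-th largest part of Q; that is, the decreasing rearrangement mw*(Q) covers mw*(P) in Young's lattice. Moreover, every covering pair λ ⋖ μ of partitions in Young's lattice is of the form mw*(P) ⋖ mw*(Q) for some covering pair Q ⋗ P in 𝔑, and mw* maps the set of compositions onto the set of all partitions. -/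
/-
Sorting only sees the multiset of parts, and in a weakly decreasing list the `i`-th part is at
least `t > 0` exactly when more than `i` parts are at least `t`. A cover in 𝔑 raises the weight
by one and can only increase the number of parts `≥ t`, so the sorted lists compare entrywise.
Conversely a partition is its own sorted rearrangement, and between lists of positive parts a
Young cover raises one part by 1 or appends a part 1 (comparing weights entrywise forces
everything else to agree), which is a cover in 𝔑.
-/

/-- A composition: a finite list of positive integers. -/
def IsComposition (P : List ℕ) : Prop := ∀ x ∈ P, 0 < x

/-- Covering relation of the poset 𝔑: prepend a part 1, append a part 1,
or increase one part by 1. -/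
def coverN (P Q : List ℕ) : Prop :=
  Q = 1 :: P ∨ Q = P ++ [1] ∨ ∃ j, j < P.length ∧ Q = P.set j (P.getD j 0 + 1)

/-- `mwStar P` is the decreasing rearrangement of `P`. -/
def mwStar (P : List ℕ) : List ℕ := ((P : Multiset ℕ).sort (· ≤ ·)).reverse

/-- A partition: a weakly decreasing list of positive integers. -/
def IsPartition (l : List ℕ) : Prop := (∀ x ∈ l, 0 < x) ∧ l.Pairwise (· ≥ ·)

/-- Covering in Young's lattice: the weight goes up by one and every part weakly increases
(parts beyond the width are taken to be `0`). -/
def YoungCover (lam mu : List ℕ) : Prop :=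
  mu.sum = lam.sum + 1 ∧ ∀ i, lam.getD i 0 ≤ mu.getD i 0

lemma mwStar_perm (P : List ℕ) : (mwStar P).Perm P :=
  (List.reverse_perm _).trans (Multiset.coe_eq_coe.mp (Multiset.sort_eq _ _))

lemma pairwise_mwStar (P : List ℕ) : (mwStar P).Pairwise (· ≥ ·) :=
  List.pairwise_reverse.mpr (Multiset.pairwise_sort _ _)

lemma mwStar_eq_self {l : List ℕ} (h : l.Pairwise (· ≥ ·)) : mwStar l = l :=
  List.Perm.eq_of_pairwise' (pairwise_mwStar l) h (mwStar_perm l)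

lemma le_getD_iff_lt_countP {L : List ℕ} (hL : L.Pairwise (· ≥ ·)) {t : ℕ} (ht : 0 < t)
    (i : ℕ) : t ≤ L.getD i 0 ↔ i < L.countP (t ≤ ·) := by
  induction L generalizing i with
  | nil => simp; omega
  | cons a L ih =>
    obtain ⟨ha, hL⟩ := List.pairwise_cons.mp hL
    by_cases hta : t ≤ a
    · cases i with
      | zero => simp [hta]
      | succ i => rw [List.getD_cons_succ, List.countP_cons, ih hL i]; simp [hta]
    · have hzero : L.countP (t ≤ ·) = 0 :=
        List.countP_eq_zero.mpr fun b hb => by have := ha b hb; simp; omega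
      cases i with
      | zero => rw [List.getD_cons_zero, List.countP_cons, hzero]; simp [hta]
      | succ i => rw [List.getD_cons_succ, List.countP_cons, ih hL i, hzero]; simp [hta]

lemma getD_le_getD_of_countP_le {L M : List ℕ} (hL : L.Pairwise (· ≥ ·))
    (hM : M.Pairwise (· ≥ ·)) (h : ∀ t, L.countP (t ≤ ·) ≤ M.countP (t ≤ ·)) (i : ℕ) :
    L.getD i 0 ≤ M.getD i 0 := by
  rcases Nat.eq_zero_or_pos (L.getD i 0) with h0 | hpos
  · omega
  · rw [le_getD_iff_lt_countP hM hpos]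
    exact ((le_getD_iff_lt_countP hL hpos i).mp le_rfl).trans_le (h _)

lemma youngCover_mwStar_of_countP_le {P Q : List ℕ} (hsum : Q.sum = P.sum + 1)
    (hcount : ∀ t, P.countP (t ≤ ·) ≤ Q.countP (t ≤ ·)) :
    YoungCover (mwStar P) (mwStar Q) := by
  refine ⟨by rw [(mwStar_perm Q).sum_eq, (mwStar_perm P).sum_eq, hsum], ?_⟩
  refine getD_le_getD_of_countP_le (pairwise_mwStar P) (pairwise_mwStar Q) fun t => ?_
  rw [(mwStar_perm P).countP_eq, (mwStar_perm Q).countP_eq]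
  exact hcount t

lemma sum_set_getD_succ (P : List ℕ) {j : ℕ} (hj : j < P.length) :
    (P.set j (P.getD j 0 + 1)).sum = P.sum + 1 := by
  induction P generalizing j with
  | nil => simp at hj
  | cons a P ih =>
    cases j with
    | zero => simp; omega
    | succ j =>
      simp only [List.getD_cons_succ, List.set_cons_succ, List.sum_cons]
      rw [ih (by simpa using hj)]; omega

lemma countP_le_countP_set_getD_succ (t : ℕ) (P : List ℕ) {j : ℕ} (hj : j < P.length) :
    P.countP (t ≤ ·) ≤ (P.set j (P.getD j 0 + 1)).countP (t ≤ ·) := by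
  induction P generalizing j with
  | nil => simp at hj
  | cons a P ih =>
    cases j with
    | zero =>
      simp only [List.getD_cons_zero, List.set_cons_zero, List.countP_cons]
      by_cases hta : t ≤ a
      · simp [hta, (by omega : t ≤ a + 1)]
      · simp [hta]
    | succ j =>
      simp only [List.getD_cons_succ, List.set_cons_succ, List.countP_cons]
      have := ih (by simpa using hj : j < P.length); omega

lemma coverN.sum_eq {P Q : List ℕ} (h : coverN P Q) : Q.sum = P.sum + 1 := by
  rcases h with rfl | rfl | ⟨j, hj, rfl⟩
  · simp [add_comm]
  · simp
  · exact sum_set_getD_succ P hj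

lemma coverN.countP_le {P Q : List ℕ} (h : coverN P Q) (t : ℕ) :
    P.countP (t ≤ ·) ≤ Q.countP (t ≤ ·) := by
  rcases h with rfl | rfl | ⟨j, hj, rfl⟩
  · exact (List.sublist_cons_self 1 P).countP_le
  · exact (List.sublist_append_left P [1]).countP_le
  · exact countP_le_countP_set_getD_succ t P hj

lemma sum_le_sum_of_getD_le {l m : List ℕ} (h : ∀ i, l.getD i 0 ≤ m.getD i 0) :
    l.sum ≤ m.sum := by
  induction l generalizing m with
  | nil => simp
  | cons c l ih =>
    cases m with
    | nil =>
      have hc : c ≤ 0 := by simpa using h 0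
      have hl : l.sum ≤ ([] : List ℕ).sum := ih fun i => by simpa using h (i + 1)
      simp only [List.sum_cons, List.sum_nil] at hl ⊢
      omega
    | cons d m =>
      have hcd : c ≤ d := by simpa using h 0
      have hlm : l.sum ≤ m.sum := ih fun i => by simpa using h (i + 1)
      simp only [List.sum_cons]
      omega

lemma eq_of_getD_le_of_sum_le {l m : List ℕ} (hl : IsComposition l) (hm : IsComposition m)
    (hle : ∀ i, l.getD i 0 ≤ m.getD i 0) (hsum : m.sum ≤ l.sum) : m = l := by
  induction l generalizing m with
  | nil =>
    cases m with
    | nil => rfl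
    | cons d m => have := hm d (by simp); simp at hsum; omega
  | cons c l ih =>
    obtain ⟨hc, hl⟩ := List.forall_mem_cons.mp hl
    cases m with
    | nil => have := hle 0; simp at this; omega
    | cons d m =>
      have htail : ∀ i, l.getD i 0 ≤ m.getD i 0 := fun i => by simpa using hle (i + 1)
      have hcd : c ≤ d := by simpa using hle 0
      have htail_sum := sum_le_sum_of_getD_le htail
      simp only [List.sum_cons] at hsum
      rw [ih hl (List.forall_mem_cons.mp hm).2 htail (by omega), show d = c by omega]

lemma eq_append_or_eq_set_of_youngCover {lam mu : List ℕ} (hlam : IsComposition lam)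
    (hmu : IsComposition mu) (h : YoungCover lam mu) :
    mu = lam ++ [1] ∨ ∃ j, j < lam.length ∧ mu = lam.set j (lam.getD j 0 + 1) := by
  obtain ⟨hsum, hle⟩ := h
  induction lam generalizing mu with
  | nil =>
    left
    obtain _ | ⟨d, m⟩ := mu
    · simp at hsum
    · have hd := hmu d (by simp)
      simp only [List.sum_cons, List.sum_nil] at hsum
      have hm := eq_of_getD_le_of_sum_le (l := []) (fun _ h => by simp at h)
        (List.forall_mem_cons.mp hmu).2 (by simp) (by omega)
      simp [hm]; omega
  | cons a lam ih =>
    obtain ⟨ha, hlam⟩ := List.forall_mem_cons.mp hlam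
    obtain _ | ⟨b, mu⟩ := mu
    · have := hle 0; simp at this; omega
    obtain ⟨hb, hmu⟩ := List.forall_mem_cons.mp hmu
    have htail : ∀ i, lam.getD i 0 ≤ mu.getD i 0 := fun i => by simpa using hle (i + 1)
    have hab : a ≤ b := by simpa using hle 0
    have htail_sum := sum_le_sum_of_getD_le htail
    simp only [List.sum_cons] at hsum
    by_cases hba : b = a
    · rw [hba]
      rcases ih hlam hmu (by omega) htail with rfl | ⟨j, hj, rfl⟩
      · simp
      · exact Or.inr ⟨j + 1, by simpa using hj, by simp⟩
    · right
      refine ⟨0, by simp, ?_⟩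
      rw [eq_of_getD_le_of_sum_le hlam hmu htail (by omega)]
      simp; omega

theorem stmt1 :
    (∀ P Q : List ℕ, IsComposition P → IsComposition Q → coverN P Q →
      YoungCover (mwStar P) (mwStar Q)) ∧
    (∀ lam mu : List ℕ, IsPartition lam → IsPartition mu → YoungCover lam mu →
      ∃ P Q : List ℕ, IsComposition P ∧ IsComposition Q ∧ coverN P Q ∧
        mwStar P = lam ∧ mwStar Q = mu) ∧
    (∀ lam : List ℕ, IsPartition lam → ∃ P : List ℕ, IsComposition P ∧ mwStar P = lam) := by
  refine ⟨fun P Q _ _ h => youngCover_mwStar_of_countP_le h.sum_eq h.countP_le, ?_, ?_⟩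
  · intro lam mu hlam hmu h
    refine ⟨lam, mu, hlam.1, hmu.1, ?_, mwStar_eq_self hlam.2, mwStar_eq_self hmu.2⟩
    exact Or.inr (eq_append_or_eq_set_of_youngCover hlam.1 hmu.1 h)
  · exact fun lam hlam => ⟨lam, hlam.1, mwStar_eq_self hlam.2⟩
end

section
/- Let α be a composition of N with r ≥ 1 parts which is not all-ones. Then for every k ≥ r, L_k^α[𝔑](t) · ∏_{i=r}^{k} (1 − it) = 2^{k−r}·t^{N+k−r} in ℤ[[t]]. -/
/-- `ank cover α n k` is the number of saturated chains (with respect to `cover`)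
starting at `α` and ending at a composition of `n` with `k` parts. -/
noncomputable def ank (cover : List ℕ → List ℕ → Prop) (α : List ℕ) (n k : ℕ) : ℕ :=
  Nat.card {c : List (List ℕ) //
    c.Chain' cover ∧ c.head? = some α ∧
      ∃ Q, c.getLast? = some Q ∧ Q.sum = n ∧ Q.length = k}

/-- The generating function `L_k^α(t) = Σ_n a_{n,k}^α t^n`. -/
noncomputable def Lser (cover : List ℕ → List ℕ → Prop) (α : List ℕ) (k : ℕ) :
    PowerSeries ℤ :=
  PowerSeries.mk fun n => (ank cover α n k : ℤ)

/-!
Deleting the last composition of a saturated chain shows that, for `n ≥ N` and `k ≥ 1`,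
`a_{n+1,k} = k a_{n,k} + 2 a_{n,k-1}`: the new composition of width `k` arises either by
increasing one of the `k` parts of a composition of width `k`, or by prepending or appending a `1`
to one of width `k - 1`. These two cases give different compositions because a part larger than
`1` survives every covering step, so no composition of the chain is all-ones. Since
`a_{n,k} = [n = N ∧ k = r]` for `n ≤ N`, this reads
`L_k (1 - k t) = 2 t L_{k-1} + [k = r] t^N`, and the product telescopes.
-/

namespace List

variable {β : Type*} {R : β → β → Prop}

theorem IsChain.reflTransGen {c : List β} {a b : β} (hc : c.IsChain R) (ha : c.head? = some a)
    (hb : c.getLast? = some b) : Relation.ReflTransGen R a b := by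
  have hne : c ≠ [] := by rintro rfl; simp at ha
  rw [head?_eq_some_head hne, Option.some.injEq] at ha
  rw [getLast?_eq_some_getLast hne, Option.some.injEq] at hb
  exact ha ▸ hb ▸ relationReflTransGen_of_exists_isChain c hc hne

theorem IsChain.grade_add_one {f : β → ℕ} (hf : ∀ a b, R a b → f b = f a + 1) :
    ∀ {c : List β} {a b : β}, c.IsChain R → c.head? = some a → c.getLast? = some b →
      f b + 1 = f a + c.length
  | [], _, _, _, ha, _ => by simp at ha
  | [x], a, b, _, ha, hb => by simp_all
  | x :: y :: t, a, b, hc, ha, hb => by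
    obtain ⟨hxy, hc⟩ := isChain_cons_cons.mp hc
    rw [head?_cons, Option.some.injEq] at ha
    subst ha
    have := hc.grade_add_one hf (head?_cons ..) (by rwa [getLast?_cons_cons] at hb)
    rw [hf _ _ hxy] at this
    simp only [length_cons] at this ⊢
    omega

theorem finite_setOf_isChain_cons (hR : ∀ a, {b | R a b}.Finite) :
    ∀ (m : ℕ) (a : β), {c : List β | (a :: c).IsChain R ∧ c.length = m}.Finite
  | 0, a => (Set.finite_singleton []).subset fun c ⟨_, hc⟩ => length_eq_zero_iff.mp hc
  | m + 1, a => by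
    refine ((hR a).biUnion fun b _ => (finite_setOf_isChain_cons hR m b).image (b :: ·)).subset ?_
    rintro (_ | ⟨b, c⟩) ⟨hc, hl⟩
    · simp at hl
    · obtain ⟨hab, hc⟩ := isChain_cons_cons.mp hc
      exact Set.mem_biUnion hab ⟨c, ⟨hc, by simpa using hl⟩, rfl⟩

theorem forall_mem_eq_of_cons_eq_concat {a : β} {l : List β} (h : a :: l = l ++ [a]) :
    ∀ x ∈ l, x = a := by
  induction l with
  | nil => simp
  | cons y l ih =>
    obtain ⟨rfl, h⟩ := cons.inj h
    simpa using ih h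

end List

def incrPart (P : List ℕ) (j : ℕ) : List ℕ := P.set j (P.getD j 0 + 1)

@[simp]
theorem length_incrPart (P : List ℕ) (j : ℕ) : (incrPart P j).length = P.length :=
  List.length_set ..

theorem incrPart_inj {P : List ℕ} {i j : ℕ} (hi : i < P.length)
    (h : incrPart P i = incrPart P j) : i = j := by
  by_contra hij
  have := congrArg (·[i]?) h
  simp [incrPart, Ne.symm hij, hi] at this

theorem sum_incrPart {P : List ℕ} {j : ℕ} (hj : j < P.length) :
    (incrPart P j).sum = P.sum + 1 := by
  induction P generalizing j with
  | nil => simp at hj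
  | cons x P ih =>
    cases j with
    | zero => simp [incrPart, add_right_comm]
    | succ j => simpa [incrPart, add_assoc] using ih (by simpa using hj)

namespace coverN

variable {P Q : List ℕ}

theorem sum_eq_s10 (h : coverN P Q) : Q.sum = P.sum + 1 := by
  rcases h with rfl | rfl | ⟨j, hj, rfl⟩
  · simp [add_comm]
  · simp
  · exact sum_incrPart hj

theorem length_le (h : coverN P Q) : P.length ≤ Q.length := by
  rcases h with rfl | rfl | ⟨j, hj, rfl⟩ <;> simp

theorem exists_one_lt (h : coverN P Q) (hP : ∃ a ∈ P, 1 < a) : ∃ a ∈ Q, 1 < a := by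
  obtain ⟨a, ha, ha1⟩ := hP
  rcases h with rfl | rfl | ⟨j, hj, rfl⟩
  · exact ⟨a, by simp [ha], ha1⟩
  · exact ⟨a, by simp [ha], ha1⟩
  · obtain ⟨i, hi, rfl⟩ := List.getElem_of_mem ha
    by_cases hij : i = j
    · subst hij
      exact ⟨(incrPart P i)[i]'(by simpa), List.getElem_mem _, by simpa [incrPart, hi] using ha1.trans (lt_add_one _)⟩
    · exact ⟨(incrPart P j)[i]'(by simpa), List.getElem_mem _, by simpa [incrPart, Ne.symm hij]⟩

theorem finite_setOf (P : List ℕ) : {Q | coverN P Q}.Finite := by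
  refine (((Set.finite_Iio P.length).image (incrPart P)).insert (P ++ [1])).insert (1 :: P)
    |>.subset ?_
  rintro Q (rfl | rfl | ⟨j, hj, rfl⟩)
  · simp
  · simp
  · exact .inr (.inr ⟨j, hj, rfl⟩)

end coverN

def IsSatChain (α : List ℕ) (n k : ℕ) (c : List (List ℕ)) : Prop :=
  c.IsChain coverN ∧ c.head? = some α ∧ ∃ Q, c.getLast? = some Q ∧ Q.sum = n ∧ Q.length = k

theorem ank_coverN (α : List ℕ) (n k : ℕ) :
    ank coverN α n k = Nat.card {c // IsSatChain α n k c} := rfl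

def lastOf (c : List (List ℕ)) : List ℕ := c.getLast?.getD []

namespace IsSatChain

variable {α : List ℕ} {d : List (List ℕ)} {n k : ℕ}

theorem getLast?_eq (h : IsSatChain α n k d) : d.getLast? = some (lastOf d) := by
  obtain ⟨-, -, Q, hQ, -⟩ := h
  simp [lastOf, hQ]

theorem sum_lastOf (h : IsSatChain α n k d) : (lastOf d).sum = n := by
  obtain ⟨-, -, Q, hQ, hs, -⟩ := h
  simp [lastOf, hQ, hs]

theorem length_lastOf (h : IsSatChain α n k d) : (lastOf d).length = k := by
  obtain ⟨-, -, Q, hQ, -, hl⟩ := h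
  simp [lastOf, hQ, hl]

theorem sum_add_one (h : IsSatChain α n k d) : n + 1 = α.sum + d.length := by
  obtain ⟨hd, hα, Q, hQ, rfl, -⟩ := h
  exact hd.grade_add_one (f := List.sum) (fun _ _ hPQ => hPQ.sum_eq_s10) hα hQ

theorem reflTransGen (h : IsSatChain α n k d) : Relation.ReflTransGen coverN α (lastOf d) :=
  h.1.reflTransGen h.2.1 h.getLast?_eq

theorem length_le (h : IsSatChain α n k d) : α.length ≤ k := by
  rw [← h.length_lastOf]
  have hr := h.reflTransGen
  generalize lastOf d = P at hr ⊢
  induction hr with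
  | refl => exact le_rfl
  | tail _ hPQ ih => exact ih.trans hPQ.length_le

theorem exists_one_lt (h : IsSatChain α n k d) (hα : ∃ a ∈ α, 1 < a) :
    ∃ a ∈ lastOf d, 1 < a := by
  have hr := h.reflTransGen
  generalize lastOf d = P at hr ⊢
  induction hr with
  | refl => exact hα
  | tail _ hPQ ih => exact hPQ.exists_one_lt ih

theorem eq_singleton (h : IsSatChain α n k d) (hn : n ≤ α.sum) :
    d = [α] ∧ n = α.sum ∧ k = α.length := by
  have hne : d ≠ [] := by rintro rfl; simp [IsSatChain] at h
  have := List.length_pos_of_ne_nil hne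
  have hlen : d.length = 1 := by have := h.sum_add_one; omega
  obtain ⟨x, rfl⟩ := List.length_eq_one_iff.mp hlen
  obtain ⟨-, hα, Q, hQ, rfl, rfl⟩ := h
  obtain rfl : x = α := by simpa using hα
  obtain rfl : Q = x := by simpa using hQ.symm
  simp

theorem concat (h : IsSatChain α n k d) {Q : List ℕ} (hQ : coverN (lastOf d) Q) :
    IsSatChain α (n + 1) Q.length (d ++ [Q]) := by
  refine ⟨h.1.append (List.isChain_singleton Q) ?_, ?_, Q, List.getLast?_concat, ?_, rfl⟩
  · simpa [h.getLast?_eq] using hQ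
  · simp [h.2.1]
  · rw [hQ.sum_eq_s10, h.sum_lastOf]

theorem exists_concat (h : IsSatChain α (n + 1) k d) (hn : α.sum ≤ n) :
    ∃ c Q, d = c ++ [Q] ∧ IsSatChain α n (lastOf c).length c ∧ coverN (lastOf c) Q ∧
      Q.length = k := by
  have hlen := h.sum_add_one
  obtain ⟨hd, hα, Q', hQ, hs, rfl⟩ := h
  rcases List.eq_nil_or_concat' d with rfl | ⟨c, Q, rfl⟩
  · simp at hα
  obtain rfl : Q = Q' := by simpa using hQ
  rcases List.eq_nil_or_concat' c with rfl | ⟨c, P, rfl⟩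
  · simp only [List.nil_append, List.length_cons, List.length_nil] at hlen
    omega
  have hP : lastOf (c ++ [P]) = P := by simp [lastOf]
  have hPQ : coverN P Q := (List.isChain_append.mp hd).2.2 P (by simp) Q (by simp)
  refine ⟨c ++ [P], Q, rfl, ⟨hd.left_of_append, ?_, P, by simp, ?_, by rw [hP]⟩, by rwa [hP],
    rfl⟩
  · cases c <;> simp_all
  · have := hPQ.sum_eq_s10; omega

end IsSatChain

theorem finite_setOf_isSatChain (α : List ℕ) (n k : ℕ) : {d | IsSatChain α n k d}.Finite := by
  refine ((List.finite_setOf_isChain_cons coverN.finite_setOf (n - α.sum) α).image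
    (α :: ·)).subset ?_
  rintro (_ | ⟨x, d⟩) h
  · simpa using h.2.1
  · obtain rfl : x = α := by simpa using h.2.1
    have := h.sum_add_one
    exact ⟨d, ⟨h.1, by simp only [List.length_cons] at this; omega⟩, rfl⟩

section Recursion

variable {α : List ℕ} {n : ℕ}

theorem ank_of_le_sum (k : ℕ) (hn : n ≤ α.sum) :
    ank coverN α n k = if n = α.sum ∧ k = α.length then 1 else 0 := by
  rw [ank_coverN]
  split_ifs with h
  · obtain ⟨rfl, rfl⟩ := h
    exact Nat.card_eq_one_iff_exists.mpr ⟨⟨[α], List.isChain_singleton α, rfl, α, rfl, rfl, rfl⟩,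
      fun c => Subtype.ext (c.2.eq_singleton hn).1⟩
  · have : IsEmpty {c // IsSatChain α n k c} :=
      ⟨fun c => h ⟨(c.2.eq_singleton hn).2.1, (c.2.eq_singleton hn).2.2⟩⟩
    exact Nat.card_of_isEmpty

theorem ank_of_lt_length {k : ℕ} (hk : k < α.length) : ank coverN α n k = 0 := by
  have : IsEmpty {c // IsSatChain α n k c} := ⟨fun c => (c.2.length_le.trans_lt hk).false⟩
  rw [ank_coverN]
  exact Nat.card_of_isEmpty

variable (α n) (k : ℕ)

/-- One more covering step at the end of a chain: increase part `j`, or add a part `1` at the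
front (`true`) or at the back (`false`). -/
def lastStep :
    {c // IsSatChain α n k c} × Fin k ⊕ {c // IsSatChain α n (k - 1) c} × Bool → List (List ℕ)
  | .inl (c, j) => c.1 ++ [incrPart (lastOf c.1) j]
  | .inr (c, b) => c.1 ++ [if b then 1 :: lastOf c.1 else lastOf c.1 ++ [1]]

variable {α n k}

theorem isSatChain_lastStep (hk : 1 ≤ k) (x) : IsSatChain α (n + 1) k (lastStep α n k x) := by
  rcases x with ⟨c, j⟩ | ⟨c, _ | _⟩ <;> have hc := c.2.length_lastOf
  · simpa [lastStep, hc] using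
      c.2.concat (Q := incrPart (lastOf c.1) j) (.inr (.inr ⟨j, by omega, rfl⟩))
  · simpa [lastStep, hc, Nat.sub_add_cancel hk] using c.2.concat (.inr (.inl rfl))
  · simpa [lastStep, hc, Nat.sub_add_cancel hk] using c.2.concat (.inl rfl)

theorem lastStep_injective (hα : ∃ a ∈ α, 1 < a) (hk : 1 ≤ k) :
    Function.Injective (lastStep α n k) := by
  rintro (⟨c, i⟩ | ⟨c, a⟩) (⟨c', j⟩ | ⟨c', b⟩) h <;>
    obtain ⟨hcc, hQ⟩ := List.append_singleton_inj.mp h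
  · obtain rfl := Subtype.ext hcc
    have hi : (i : ℕ) < (lastOf c.1).length := by rw [c.2.length_lastOf]; exact i.2
    rw [Fin.ext (incrPart_inj hi hQ)]
  · have := congrArg (List.length ∘ lastOf) hcc
    simp only [Function.comp, c.2.length_lastOf, c'.2.length_lastOf] at this
    omega
  · have := congrArg (List.length ∘ lastOf) hcc
    simp only [Function.comp, c.2.length_lastOf, c'.2.length_lastOf] at this
    omega
  · obtain rfl := Subtype.ext hcc
    obtain ⟨x, hx, hx1⟩ := c.2.exists_one_lt hα
    cases a <;> cases b
    · rfl
    · exact absurd (List.forall_mem_eq_of_cons_eq_concat hQ.symm x hx) hx1.ne'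
    · exact absurd (List.forall_mem_eq_of_cons_eq_concat hQ x hx) hx1.ne'
    · rfl

theorem lastStep_surjective (hn : α.sum ≤ n) (d : List (List ℕ))
    (hd : IsSatChain α (n + 1) k d) :
    ∃ x, lastStep α n k x = d := by
  obtain ⟨c, Q, rfl, hc, hcov, rfl⟩ := hd.exists_concat hn
  rcases hcov with rfl | rfl | ⟨j, hj, rfl⟩
  · exact ⟨.inr (⟨c, by simpa using hc⟩, true), rfl⟩
  · exact ⟨.inr (⟨c, by simpa using hc⟩, false), rfl⟩
  · exact ⟨.inl (⟨c, by simpa using hc⟩, ⟨j, by simpa using hj⟩), rfl⟩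

theorem ank_succ (hα : ∃ a ∈ α, 1 < a) (hn : α.sum ≤ n) (hk : 1 ≤ k) :
    ank coverN α (n + 1) k = k * ank coverN α n k + 2 * ank coverN α n (k - 1) := by
  have : Finite {c // IsSatChain α n k c} := (finite_setOf_isSatChain α n k).to_subtype
  have : Finite {c // IsSatChain α n (k - 1) c} := (finite_setOf_isSatChain α n (k - 1)).to_subtype
  let e := Equiv.ofBijective
    (fun x => (⟨_, isSatChain_lastStep hk x⟩ : {d // IsSatChain α (n + 1) k d}))
    ⟨fun x y h => lastStep_injective hα hk (congrArg Subtype.val h),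
      fun d => (lastStep_surjective hn d.1 d.2).imp fun _ h => Subtype.ext h⟩
  rw [ank_coverN, ank_coverN, ank_coverN, ← Nat.card_congr e, Nat.card_sum, Nat.card_prod,
    Nat.card_prod]
  simp [mul_comm]

end Recursion

open PowerSeries

theorem PowerSeries.mul_prod_Icc_one_sub_eq {R : Type*} [CommRing R] (L : ℕ → R⟦X⟧) (c : R⟦X⟧)
    {r N : ℕ} (hr : L r * (1 - (r : R⟦X⟧) * X) = X ^ N)
    (hstep : ∀ k, r ≤ k → L (k + 1) * (1 - ((k + 1 : ℕ) : R⟦X⟧) * X) = c * L k) (m : ℕ) :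
    L (r + m) * ∏ i ∈ Finset.Icc r (r + m), (1 - (i : R⟦X⟧) * X) = c ^ m * X ^ N := by
  induction m with
  | zero => simpa using hr
  | succ m ih =>
    calc L (r + (m + 1)) * ∏ i ∈ Finset.Icc r (r + (m + 1)), (1 - (i : R⟦X⟧) * X)
        = L (r + m + 1) * (1 - ((r + m + 1 : ℕ) : R⟦X⟧) * X) *
            ∏ i ∈ Finset.Icc r (r + m), (1 - (i : R⟦X⟧) * X) := by
          rw [← add_assoc, Finset.prod_Icc_succ_top (by omega)]
          ring
      _ = c * (L (r + m) * ∏ i ∈ Finset.Icc r (r + m), (1 - (i : R⟦X⟧) * X)) := by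
          rw [hstep _ (by omega)]
          ring
      _ = c ^ (m + 1) * X ^ N := by
          rw [ih]
          ring

theorem Lser_coverN_eq {α : List ℕ} (hα : ∃ a ∈ α, 1 < a) {k : ℕ} (hk : 1 ≤ k) :
    Lser coverN α k = X * ((k : ℤ⟦X⟧) * Lser coverN α k + 2 * Lser coverN α (k - 1)) +
      if k = α.length then X ^ α.sum else 0 := by
  have hcast (m : ℕ) (f : ℤ⟦X⟧) (i : ℕ) : coeff i ((m : ℤ⟦X⟧) * f) = m * coeff i f := by
    rw [← map_natCast (C (R := ℤ)), coeff_C_mul]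
  ext (_ | n)
  · rw [map_add, coeff_zero_X_mul, zero_add]
    split_ifs with hkr <;> simp [Lser, ank_of_le_sum, coeff_X_pow, hkr]
  · rw [map_add, coeff_succ_X_mul, map_add, hcast,
      show (2 : ℤ⟦X⟧) = ((2 : ℕ) : ℤ⟦X⟧) by norm_num, hcast]
    simp only [Lser, coeff_mk, apply_ite (coeff (n + 1)), coeff_X_pow, map_zero]
    rcases le_or_gt α.sum n with hn | hn
    · simp [ank_succ hα hn hk, show n + 1 ≠ α.sum by omega]
    · simp [ank_of_le_sum _ hn.le, ank_of_le_sum _ hn, hn.ne, ite_and, and_comm]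

theorem Lser_coverN_mul_one_sub {α : List ℕ} (hα : ∃ a ∈ α, 1 < a) {k : ℕ} (hk : 1 ≤ k) :
    Lser coverN α k * (1 - (k : ℤ⟦X⟧) * X) =
      2 * X * Lser coverN α (k - 1) + if k = α.length then X ^ α.sum else 0 := by
  linear_combination Lser_coverN_eq hα hk

theorem Lser_coverN_eq_zero {α : List ℕ} {k : ℕ} (hk : k < α.length) : Lser coverN α k = 0 := by
  ext n
  simp [Lser, ank_of_lt_length hk]

theorem stmt10_general (α : List ℕ) (hα : IsComposition α) (N r : ℕ) (hN : α.sum = N)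
    (hr : α.length = r) (hno : ¬ ∀ a ∈ α, a = 1) :
    ∀ k, r ≤ k →
      Lser coverN α k * ∏ i ∈ Finset.Icc r k, (1 - (i : PowerSeries ℤ) * X) =
        2 ^ (k - r) * X ^ (N + k - r) := by
  subst hN hr
  have hbig : ∃ a ∈ α, 1 < a := by
    push Not at hno
    obtain ⟨a, ha, ha1⟩ := hno
    exact ⟨a, ha, by have := hα a ha; omega⟩
  have hr : 1 ≤ α.length := by
    obtain ⟨a, ha, -⟩ := hbig
    exact List.length_pos_of_mem ha
  have base : Lser coverN α α.length * (1 - (α.length : ℤ⟦X⟧) * X) = X ^ α.sum := by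
    simpa [Lser_coverN_eq_zero (Nat.sub_lt hr one_pos)] using Lser_coverN_mul_one_sub hbig hr
  have step (k : ℕ) (hk : α.length ≤ k) :
      Lser coverN α (k + 1) * (1 - ((k + 1 : ℕ) : ℤ⟦X⟧) * X) = 2 * X * Lser coverN α k := by
    simpa [show k + 1 ≠ α.length by omega] using
      Lser_coverN_mul_one_sub hbig (k := k + 1) (by omega)
  intro k hk
  obtain ⟨m, rfl⟩ := Nat.exists_eq_add_of_le hk
  rw [mul_prod_Icc_one_sub_eq _ (2 * X) base step, Nat.add_sub_cancel_left,
    show α.sum + (α.length + m) - α.length = α.sum + m by omega]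
  ring

open PowerSeries in
theorem stmt10 (α : List ℕ) (hα : IsComposition α) (N r : ℕ) (hN : α.sum = N)
    (hr : α.length = r) (hr1 : 1 ≤ r) (hno : ¬ ∀ a ∈ α, a = 1) :
    ∀ k, r ≤ k →
      Lser coverN α k * ∏ i ∈ Finset.Icc r k, (1 - (i : PowerSeries ℤ) * X) =
        2 ^ (k - r) * X ^ (N + k - r) :=
  stmt10_general α hα N r hN hr hno
end

section
/- Fix r ≥ 1 and define polynomials D_k ∈ ℤ[t] for k ≥ r by D_r = 1 and D_k = 2·D_{k−1} − ∏_{i=r}^{k−1} (1 − it) for k > r. Then for every k > r, the polynomial D_k has degree k − r, constant term 1, and leading coefficient (−1)^{k−r+1}·(k−1)!/(r−1)!. -/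
/-!
Write `P r k = ∏_{i=r}^{k-1} (1 - i X)`, a polynomial of degree `k - r` with constant term `1` and
leading coefficient `∏ (-i) = (-1)^(k-r) (k-1)!/(r-1)!`. By induction from `D r = 1`, the degree of
`D (k-1)` is `k - 1 - r`, so in `D k = 2 D (k-1) - P r k` the product strictly dominates: `D k`
inherits the degree of `P r k` and the negative of its leading coefficient, while the constant
terms give `2 · 1 - 1 = 1`.
-/

open Polynomial Finset Nat

theorem Finset.prod_Ico_id_eq_factorial_div {r k : ℕ} (hr : 0 < r) (hrk : r ≤ k) :
    ∏ i ∈ Ico r k, i = (k - 1)! / (r - 1)! := by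
  rw [prod_Ico_eq_prod_range, ← Nat.ascFactorial_eq_prod_range, Nat.ascFactorial_eq_div' _ _ hr,
    Nat.add_sub_cancel' hrk]

namespace Polynomial

section TwoMulSub

variable {R : Type*} [Ring R] {p q : R[X]}

theorem natDegree_two_mul_lt (h : p.natDegree < q.natDegree) : (2 * p).natDegree < q.natDegree :=
  natDegree_mul_le.trans_lt (by rwa [natDegree_ofNat, zero_add])

theorem natDegree_two_mul_sub (h : p.natDegree < q.natDegree) :
    (2 * p - q).natDegree = q.natDegree :=
  natDegree_sub_eq_right_of_natDegree_lt (natDegree_two_mul_lt h)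

theorem leadingCoeff_two_mul_sub (h : p.natDegree < q.natDegree) :
    (2 * p - q).leadingCoeff = -q.leadingCoeff :=
  leadingCoeff_sub_of_degree_lt' (degree_lt_degree (natDegree_two_mul_lt h))

theorem coeff_zero_two_mul_sub : (2 * p - q).coeff 0 = 2 * p.coeff 0 - q.coeff 0 := by
  rw [coeff_sub, mul_coeff_zero, coeff_ofNat_zero]

end TwoMulSub

section OneSubNatCastMulX

variable {R : Type*} [Ring R]

theorem one_sub_natCast_mul_X_eq (i : ℕ) : (1 - (i : R[X]) * X) = C (-(i : R)) * X + C 1 := by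
  rw [map_neg, map_one, map_natCast, neg_mul]
  abel

variable [CharZero R] {i : ℕ}

theorem natDegree_one_sub_natCast_mul_X (hi : i ≠ 0) : (1 - (i : R[X]) * X).natDegree = 1 := by
  rw [one_sub_natCast_mul_X_eq]
  exact natDegree_linear (by simpa using hi)

theorem leadingCoeff_one_sub_natCast_mul_X (hi : i ≠ 0) :
    (1 - (i : R[X]) * X).leadingCoeff = -(i : R) := by
  rw [one_sub_natCast_mul_X_eq]
  exact leadingCoeff_linear (by simpa using hi)

theorem one_sub_natCast_mul_X_ne_zero (hi : i ≠ 0) : (1 - (i : R[X]) * X) ≠ 0 :=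
  ne_zero_of_natDegree_gt (n := 0) (by rw [natDegree_one_sub_natCast_mul_X hi]; exact one_pos)

end OneSubNatCastMulX

noncomputable def prodOneSubMulX (R : Type*) [CommRing R] (r k : ℕ) : R[X] :=
  ∏ i ∈ Ico r k, (1 - (i : R[X]) * X)

section ProdOneSubMulX

variable {R : Type*} [CommRing R] {r k : ℕ}

theorem coeff_zero_prodOneSubMulX : (prodOneSubMulX R r k).coeff 0 = 1 := by
  simp [prodOneSubMulX, coeff_zero_eq_eval_zero, eval_prod]

variable [NoZeroDivisors R] [CharZero R]

theorem natDegree_prodOneSubMulX (hr : 0 < r) : (prodOneSubMulX R r k).natDegree = k - r := by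
  have hi : ∀ i ∈ Ico r k, i ≠ 0 := fun i hi => (hr.trans_le (mem_Ico.mp hi).1).ne'
  rw [prodOneSubMulX, natDegree_prod _ _ fun i hi' => one_sub_natCast_mul_X_ne_zero (hi i hi'),
    sum_congr rfl fun i hi' => natDegree_one_sub_natCast_mul_X (hi i hi')]
  simp

theorem leadingCoeff_prodOneSubMulX (hr : 0 < r) (hrk : r ≤ k) :
    (prodOneSubMulX R r k).leadingCoeff = (-1) ^ (k - r) * (((k - 1)! / (r - 1)! : ℕ) : R) := by
  have hi : ∀ i ∈ Ico r k, i ≠ 0 := fun i hi => (hr.trans_le (mem_Ico.mp hi).1).ne'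
  rw [prodOneSubMulX, leadingCoeff_prod,
    prod_congr rfl fun i hi' => leadingCoeff_one_sub_natCast_mul_X (hi i hi'), prod_neg,
    ← Finset.prod_Ico_id_eq_factorial_div hr hrk, Nat.card_Ico, Nat.cast_prod]

end ProdOneSubMulX

end Polynomial

theorem natDegree_eq_and_coeff_zero_of_recursion {R : Type*} [CommRing R] [NoZeroDivisors R]
    [CharZero R] {r : ℕ} (hr : 0 < r) {D : ℕ → R[X]} (hDr : D r = 1)
    (hDk : ∀ k, r < k → D k = 2 * D (k - 1) - prodOneSubMulX R r k) :
    ∀ k, r ≤ k → (D k).natDegree = k - r ∧ (D k).coeff 0 = 1 := by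
  intro k hk
  induction k, hk using Nat.le_induction with
  | base => simp [hDr]
  | succ k hk ih =>
    have hlt : (D k).natDegree < (prodOneSubMulX R r (k + 1)).natDegree := by
      rw [ih.1, natDegree_prodOneSubMulX hr]; omega
    rw [hDk (k + 1) (by omega), Nat.add_sub_cancel, natDegree_two_mul_sub hlt,
      natDegree_prodOneSubMulX hr, coeff_zero_two_mul_sub, ih.2, coeff_zero_prodOneSubMulX]
    exact ⟨rfl, by norm_num⟩

theorem stmt13 (r : ℕ) (hr : 1 ≤ r) (D : ℕ → Polynomial ℤ) (hDr : D r = 1)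
    (hDk : ∀ k, r < k →
      D k = 2 * D (k - 1) -
        ∏ i ∈ Finset.Ico r k, (1 - (i : Polynomial ℤ) * Polynomial.X)) :
    ∀ k, r < k →
      (D k).natDegree = k - r ∧
      (D k).coeff 0 = 1 ∧
      (D k).leadingCoeff =
        (-1) ^ (k - r + 1) * ((Nat.factorial (k - 1) / Nat.factorial (r - 1) : ℕ) : ℤ) := by
  intro k hk
  replace hDk : ∀ k, r < k → D k = 2 * D (k - 1) - prodOneSubMulX ℤ r k := hDk
  have hD := natDegree_eq_and_coeff_zero_of_recursion hr hDr hDk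
  have hlt : (D (k - 1)).natDegree < (prodOneSubMulX ℤ r k).natDegree := by
    rw [(hD (k - 1) (by omega)).1, natDegree_prodOneSubMulX hr]; omega
  refine ⟨(hD k hk.le).1, (hD k hk.le).2, ?_⟩
  rw [hDk k hk, leadingCoeff_two_mul_sub hlt, leadingCoeff_prodOneSubMulX hr hk.le, pow_succ]
  ring
end
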